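/- Every non-complete 3-connected simple graph with infinitely many vertices contains a contractible non-edge. -/

import Mathlib

open SimpleGraph

variable {V : Type*}

/-- A (possibly infinite) graph is `k`-connected: it has at least `k+1` vertices,
and removing any finite set of fewer than `k` vertices leaves a connected graph. -/
def KConnectedGen (k : ℕ) (G : SimpleGraph V) : Prop :=
  (∃ s : Finset V, s.card = k + 1) ∧
    ∀ S : Set V, S.Finite → S.ncard < k → (G.induce Sᶜ).Connected

/-- Contraction of the non-edge `{u, v}`: `u` and `v` are replaced by a single
vertex (represented here by `u`), adjacent to every vertex that was adjacent to
`u` or to `v`. -/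
def contractNonEdge (G : SimpleGraph V) (u v : V) : SimpleGraph {w : V // w ≠ v} where
  Adj a b := a ≠ b ∧ (G.Adj a.1 b.1 ∨ (a.1 = u ∧ G.Adj v b.1) ∨ (b.1 = u ∧ G.Adj a.1 v))
  symm := by
    refine ⟨?_⟩
    rintro a b ⟨hab, h | ⟨h1, h2⟩ | ⟨h1, h2⟩⟩
    · exact ⟨hab.symm, Or.inl h.symm⟩
    · exact ⟨hab.symm, Or.inr (Or.inr ⟨h1, h2.symm⟩)⟩
    · exact ⟨hab.symm, Or.inr (Or.inl ⟨h1, h2.symm⟩)⟩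
  loopless := ⟨fun a h => h.1 rfl⟩

/-!
A non-edge `{u, v}` is contractible as soon as no set `{u, v, t}` separates `G`: the contraction
is the image of a surjective homomorphism, and the preimage of a set of at most two vertices is
either a set of at most two vertices or of the form `{u, v, t}`.

Suppose every non-edge lies in a separating set of three vertices, and fix one such set `X`.
Some `α ∉ X` is separated by `X` from infinitely many `b`. Each such `b` is a non-neighbour
of `α`, so some `{α, b, y_b}` separates `G`; every component of `G - {α, b, y_b}` contains
neighbours of both `α` and `b`, hence meets `X`, so `{α, b, y_b}` separates two vertices `s, s'`
of `X`. For fixed `s, s'`, a path from `s` to `s'` avoiding `α` meets `b` or `y_b`, and for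
fixed `y` a path avoiding `{α, y}` meets `b`; so only finitely many `b` arise.
-/

lemma Set.exists_eq_pair_of_ncard_lt_three {α : Type*} {s : Set α} {a : α} (hs : s.Finite)
    (ha : a ∈ s) (h3 : s.ncard < 3) : ∃ b, s = {a, b} := by
  have h1 : (s \ {a}).ncard ≤ 1 := by
    rw [Set.ncard_sdiff_singleton_of_mem ha]
    omega
  have hs' : s = insert a (s \ {a}) := by rw [Set.insert_sdiff_singleton, Set.insert_eq_of_mem ha]
  rcases (Set.ncard_le_one_iff_eq hs.sdiff).1 h1 with h | ⟨b, hb⟩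
  · exact ⟨a, by rw [hs', h, Set.pair_eq_singleton, insert_empty_eq]⟩
  · exact ⟨b, by rw [hs', hb]⟩

namespace SimpleGraph

variable {W : Type*} {G : SimpleGraph V} {S T X : Set V} {x y z t α : V}

def ReachableOutside (G : SimpleGraph V) (S : Set V) (x y : V) : Prop :=
  ∃ w : G.Walk x y, ∀ z ∈ w.support, z ∉ S

def Separates (G : SimpleGraph V) (S : Set V) (x y : V) : Prop :=
  x ∉ S ∧ y ∉ S ∧ ¬ G.ReachableOutside S x y

def IsSeparator (G : SimpleGraph V) (S : Set V) : Prop :=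
  ∃ x y, G.Separates S x y

namespace ReachableOutside

lemma left_notMem (h : G.ReachableOutside S x y) : x ∉ S :=
  let ⟨w, hw⟩ := h; hw x w.start_mem_support

lemma refl (hx : x ∉ S) : G.ReachableOutside S x x :=
  ⟨.nil, by simpa using hx⟩

lemma symm (h : G.ReachableOutside S x y) : G.ReachableOutside S y x :=
  let ⟨w, hw⟩ := h; ⟨w.reverse, fun z hz => hw z (by simpa using hz)⟩

lemma trans (h : G.ReachableOutside S x y) (h' : G.ReachableOutside S y z) :
    G.ReachableOutside S x z :=
  let ⟨w, hw⟩ := h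
  let ⟨w', hw'⟩ := h'
  ⟨w.append w', fun z hz => (Walk.mem_support_append_iff w w').1 hz |>.elim (hw z) (hw' z)⟩

lemma right_notMem (h : G.ReachableOutside S x y) : y ∉ S :=
  h.symm.left_notMem

lemma cons (hxy : G.Adj x y) (hx : x ∉ S) (h : G.ReachableOutside S y z) :
    G.ReachableOutside S x z :=
  let ⟨w, hw⟩ := h
  ⟨.cons hxy w, fun a ha => (List.mem_cons.1 ha).elim (· ▸ hx) (hw a)⟩

lemma map {H : SimpleGraph W} (f : G →g H) {S : Set W}
    (h : G.ReachableOutside (f ⁻¹' S) x y) : H.ReachableOutside S (f x) (f y) :=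
  let ⟨w, hw⟩ := h
  ⟨w.map f, by simpa [Walk.support_map] using hw⟩

/-- The neighbour is the vertex just before the first visit of `t`. -/
lemma exists_adj_of_not_insert (h : G.ReachableOutside S x y) (hx : x ≠ t)
    (hn : ¬ G.ReachableOutside (insert t S) x y) :
    ∃ z, G.Adj z t ∧ G.ReachableOutside (insert t S) x z := by
  obtain ⟨w, hw⟩ := h
  induction w with
  | nil => exact absurd (refl (by simp [hx, hw _ (List.mem_singleton_self _)])) hn
  | @cons x b y hxb w ih =>
    have hxT : x ∉ insert t S := by simp [hx, hw x (by simp)]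
    by_cases hbt : b = t
    · exact ⟨x, hbt ▸ hxb, refl hxT⟩
    · obtain ⟨z, hzt, hbz⟩ := ih hbt (fun h => hn (h.cons hxb hxT))
        (fun z hz => hw z (by simp [hz]))
      exact ⟨z, hzt, hbz.cons hxb hxT⟩

lemma exists_mem_of_not_reachableOutside (h : G.ReachableOutside T z y)
    (hz : G.ReachableOutside X α z) (hy : ¬ G.ReachableOutside X α y) :
    ∃ s ∈ X, G.ReachableOutside T z s := by
  obtain ⟨w, hw⟩ := h
  induction w with
  | nil => exact absurd hz hy
  | @cons z b y hzb w ih =>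
    have hzT : z ∉ T := hw z (by simp)
    have hbT : b ∉ T := hw b (by simp)
    by_cases hbX : b ∈ X
    · exact ⟨b, hbX, (refl hbT).cons hzb hzT⟩
    · obtain ⟨s, hs, hbs⟩ := ih (hz.trans ((refl hbX).cons hzb hz.right_notMem)) hy
        (fun a ha => hw a (by simp [ha]))
      exact ⟨s, hs, hbs.cons hzb hzT⟩

end ReachableOutside

lemma Adj.reachableOutside (h : G.Adj x y) (hx : x ∉ S) (hy : y ∉ S) :
    G.ReachableOutside S x y :=
  (ReachableOutside.refl hy).cons h hx

lemma reachableOutside_of_not_isSeparator (h : ¬ G.IsSeparator S) (hx : x ∉ S) (hy : y ∉ S) :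
    G.ReachableOutside S x y := by
  by_contra hxy
  exact h ⟨x, y, hx, hy, hxy⟩

lemma reachable_induce_compl_iff {a b : ↥Sᶜ} :
    (G.induce Sᶜ).Reachable a b ↔ G.ReachableOutside S a b := by
  refine ⟨fun ⟨p⟩ => ⟨p.map (Embedding.induce Sᶜ).toHom, fun z hz => ?_⟩,
    fun ⟨w, hw⟩ => ⟨w.induce Sᶜ hw⟩⟩
  obtain ⟨c, -, rfl⟩ := List.mem_map.1 (Walk.support_map _ p ▸ hz)
  exact c.2

lemma connected_induce_compl_iff :
    (G.induce Sᶜ).Connected ↔ Sᶜ.Nonempty ∧ ¬ G.IsSeparator S := by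
  rw [connected_iff, and_comm, Set.nonempty_coe_sort]
  refine and_congr_right' ⟨fun h ⟨x, y, hx, hy, hxy⟩ => ?_, fun h a b => ?_⟩
  · exact hxy (reachable_induce_compl_iff.1 (h ⟨x, hx⟩ ⟨y, hy⟩))
  · exact reachable_induce_compl_iff.2 (reachableOutside_of_not_isSeparator h a.2 b.2)

lemma not_isSeparator_of_surjective {H : SimpleGraph W} (f : G →g H)
    (hf : Function.Surjective f) {S : Set W} (h : ¬ G.IsSeparator (f ⁻¹' S)) :
    ¬ H.IsSeparator S := by
  rintro ⟨x', y', hx', hy', hxy'⟩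
  obtain ⟨x, rfl⟩ := hf x'
  obtain ⟨y, rfl⟩ := hf y'
  exact hxy' ((reachableOutside_of_not_isSeparator h hx' hy').map f)

lemma not_isSeparator_of_kConnectedGen {k : ℕ} (hG : KConnectedGen k G) (hS : S.Finite)
    (hk : S.ncard < k) : ¬ G.IsSeparator S :=
  (connected_induce_compl_iff.1 (hG.2 S hS hk)).2

lemma exists_adj_reachableOutside_of_isSeparator (hS : ¬ G.IsSeparator S)
    (hT : G.IsSeparator (insert t S)) (hx : x ∉ insert t S) :
    ∃ z, G.Adj z t ∧ G.ReachableOutside (insert t S) x z := by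
  obtain ⟨a, b, ha, hb, hab⟩ := hT
  obtain ⟨y, hy, hxy⟩ : ∃ y ∉ insert t S, ¬ G.ReachableOutside (insert t S) x y := by
    by_cases hxa : G.ReachableOutside (insert t S) x a
    · exact ⟨b, hb, fun hxb => hab (hxa.symm.trans hxb)⟩
    · exact ⟨a, ha, hxa⟩
  have hxS : x ∉ S := fun h => hx (Set.mem_insert_of_mem t h)
  have hyS : y ∉ S := fun h => hy (Set.mem_insert_of_mem t h)
  exact (reachableOutside_of_not_isSeparator hS hxS hyS).exists_adj_of_not_insert
    (fun h => hx (h ▸ Set.mem_insert t S)) hxy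

lemma finite_setOf_separates_insert (hS : ¬ G.IsSeparator S) :
    {b | G.Separates (insert b S) x y}.Finite := by
  by_cases hxy : x ∈ S ∨ y ∈ S
  · refine Set.finite_empty.subset fun b hb => ?_
    rcases hxy with h | h
    exacts [hb.1 (Set.mem_insert_of_mem b h), hb.2.1 (Set.mem_insert_of_mem b h)]
  rw [not_or] at hxy
  obtain ⟨w, hw⟩ := reachableOutside_of_not_isSeparator hS hxy.1 hxy.2
  refine w.support.finite_toSet.subset fun b hb => ?_
  by_contra hbw
  refine hb.2.2 ⟨w, fun z hz hzT => ?_⟩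
  rcases hzT with rfl | hzS
  exacts [hbw hz, hw z hz hzS]

section NoTwoSeparator

variable (h2 : ∀ a b : V, ¬ G.IsSeparator {a, b})
include h2

/-- The component of `x` contains a neighbour of `α` and one of `b`; outside `X` these lie on
different sides of `X`, so a path between them meets `X`. -/
lemma exists_mem_reachableOutside_of_separates (hb : G.Separates X α b)
    (hT : G.IsSeparator {α, b, y}) (hx : x ∉ ({α, b, y} : Set V)) :
    ∃ s ∈ X, G.ReachableOutside {α, b, y} x s := by
  obtain ⟨hα, hbX, hαb⟩ := hb
  obtain ⟨z, hzα, hxz⟩ := exists_adj_reachableOutside_of_isSeparator (h2 b y) hT hx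
  rw [Set.insert_comm] at hT hx
  obtain ⟨z', hz'b, hxz'⟩ := exists_adj_reachableOutside_of_isSeparator (h2 α y) hT hx
  rw [Set.insert_comm] at hxz'
  by_cases hzX : z ∈ X
  · exact ⟨z, hzX, hxz⟩
  by_cases hz'X : z' ∈ X
  · exact ⟨z', hz'X, hxz'⟩
  have hαz : G.ReachableOutside X α z := hzα.symm.reachableOutside hα hzX
  have hαz' : ¬ G.ReachableOutside X α z' := fun h =>
    hαb (h.trans (hz'b.reachableOutside hz'X hbX))
  obtain ⟨s, hs, hzs⟩ := (hxz.symm.trans hxz').exists_mem_of_not_reachableOutside hαz hαz'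
  exact ⟨s, hs, hxz.trans hzs⟩

lemma exists_separates_of_separates (hb : G.Separates X α b) (hT : G.IsSeparator {α, b, y}) :
    ∃ s ∈ X, ∃ s' ∈ X, G.Separates {α, b, y} s s' := by
  by_contra! H
  obtain ⟨x, x', hx, hx', hxx'⟩ := id hT
  obtain ⟨s, hs, hxs⟩ := exists_mem_reachableOutside_of_separates h2 hb hT hx
  obtain ⟨s', hs', hx's'⟩ := exists_mem_reachableOutside_of_separates h2 hb hT hx'
  have hss' : G.ReachableOutside {α, b, y} s s' := by
    by_contra h
    exact H s hs s' hs' ⟨hxs.right_notMem, hx's'.right_notMem, h⟩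
  exact hxx' (hxs.trans (hss'.trans hx's'.symm))

/-- A path from `x` to `y` avoiding `a` meets `b` or `Y b` whenever `{a, b, Y b}` separates `x`
from `y`, and for a fixed value `c` of `Y b` a path avoiding `{a, c}` meets `b`. -/
lemma finite_setOf_separates_triple (a : V) (Y : V → V) :
    {b | G.Separates {a, b, Y b} x y}.Finite := by
  by_cases hxy : x = a ∨ y = a
  · refine Set.finite_empty.subset fun b hb => ?_
    rcases hxy with rfl | rfl
    exacts [hb.1 (Set.mem_insert _ _), hb.2.1 (Set.mem_insert _ _)]
  rw [not_or] at hxy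
  obtain ⟨π, hπ⟩ := reachableOutside_of_not_isSeparator (h2 a a) (by simpa using hxy.1)
    (by simpa using hxy.2)
  refine (π.support.finite_toSet.union (π.support.finite_toSet.biUnion fun c _ =>
    finite_setOf_separates_insert (x := x) (y := y) (h2 a c))).subset fun b hb => ?_
  by_cases hbπ : b ∈ π.support
  · exact Or.inl hbπ
  have hYπ : Y b ∈ π.support := by
    by_contra hYπ
    refine hb.2.2 ⟨π, fun z hz hzT => ?_⟩
    rcases hzT with rfl | rfl | rfl
    exacts [hπ z hz (Set.mem_insert z _), hbπ hz, hYπ hz]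
  have hb' : G.Separates (insert b {a, Y b}) x y := Set.insert_comm a b {Y b} ▸ hb
  exact Or.inr (Set.mem_biUnion hYπ hb')

lemma finite_setOf_separates_of_forall_isSeparator (hX : X.Finite)
    (H : ∀ b, G.Separates X α b → ∃ y, G.IsSeparator {α, b, y}) :
    {b | G.Separates X α b}.Finite := by
  have H' : ∀ b, ∃ y, G.Separates X α b → G.IsSeparator {α, b, y} := fun b => by
    by_cases hb : G.Separates X α b
    · exact (H b hb).imp fun _ hy _ => hy
    · exact ⟨b, fun h => absurd h hb⟩
  choose Y hY using H'
  refine ((hX.prod hX).biUnion fun p _ => finite_setOf_separates_triple h2 α Y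
    (x := p.1) (y := p.2)).subset fun b hb => ?_
  obtain ⟨s, hs, s', hs', hss'⟩ := exists_separates_of_separates h2 hb (hY b hb)
  exact Set.mem_biUnion (Set.mk_mem_prod hs hs') hss'

end NoTwoSeparator

lemma exists_infinite_setOf_separates [Infinite V] (hX : X.Finite) (hsep : G.IsSeparator X) :
    ∃ α, {b | G.Separates X α b}.Infinite := by
  obtain ⟨x, y, hx, hy, hxy⟩ := hsep
  by_contra! H
  refine hX.infinite_compl (((H x).union (H y)).subset fun b hb => ?_)
  by_cases hxb : G.ReachableOutside X x b
  · exact Or.inr ⟨hy, hb, fun hyb => hxy (hxb.trans hyb.symm)⟩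
  · exact Or.inl ⟨hx, hb, hxb⟩

theorem exists_nonEdge_forall_not_isSeparator [Infinite V]
    (h2 : ∀ a b : V, ¬ G.IsSeparator {a, b}) (hnc : ∃ u v : V, u ≠ v ∧ ¬ G.Adj u v) :
    ∃ u v : V, u ≠ v ∧ ¬ G.Adj u v ∧ ∀ t, ¬ G.IsSeparator {u, v, t} := by
  by_contra! H
  obtain ⟨u, v, huv, hadj⟩ := hnc
  obtain ⟨w, hX⟩ := H u v huv hadj
  obtain ⟨α, hα⟩ := exists_infinite_setOf_separates (Set.toFinite {u, v, w}) hX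
  refine hα (finite_setOf_separates_of_forall_isSeparator h2 (Set.toFinite _) fun b hb =>
    H α b ?_ fun h => hb.2.2 (h.reachableOutside hb.1 hb.2.1))
  rintro rfl
  exact hb.2.2 (.refl hb.1)

section Contraction

variable {u v : V}

open Classical in
noncomputable def contractVertex (huv : u ≠ v) (x : V) : {w : V // w ≠ v} :=
  if h : x = v then ⟨u, huv⟩ else ⟨x, h⟩

lemma contractVertex_self (huv : u ≠ v) : contractVertex huv v = ⟨u, huv⟩ :=
  dif_pos rfl

lemma contractVertex_of_ne (huv : u ≠ v) (hx : x ≠ v) : contractVertex huv x = ⟨x, hx⟩ :=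
  dif_neg hx

lemma contractVertex_surjective (huv : u ≠ v) : Function.Surjective (contractVertex huv) :=
  fun x => ⟨x.1, contractVertex_of_ne huv x.2⟩

noncomputable def contractNonEdgeHom (huv : u ≠ v) (hadj : ¬ G.Adj u v) :
    G →g contractNonEdge G u v where
  toFun := contractVertex huv
  map_rel' {a b} hab := by
    by_cases ha : a = v <;> by_cases hb : b = v
    · exact (hab.ne (ha.trans hb.symm)).elim
    · rw [ha] at hab
      rw [ha, contractVertex_self, contractVertex_of_ne huv hb]
      refine ⟨fun h => hadj ?_, Or.inr (Or.inl ⟨rfl, hab⟩)⟩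
      rw [Subtype.mk_eq_mk.mp h]
      exact hab.symm
    · rw [hb] at hab
      rw [hb, contractVertex_self, contractVertex_of_ne huv ha]
      refine ⟨fun h => hadj ?_, Or.inr (Or.inr ⟨rfl, hab⟩)⟩
      rwa [← Subtype.mk_eq_mk.mp h]
    · rw [contractVertex_of_ne huv ha, contractVertex_of_ne huv hb]
      exact ⟨fun h => hab.ne (congrArg Subtype.val h), Or.inl hab⟩

lemma coe_contractNonEdgeHom (huv : u ≠ v) (hadj : ¬ G.Adj u v) :
    ⇑(contractNonEdgeHom huv hadj) = contractVertex huv :=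
  rfl

lemma preimage_contractVertex_of_notMem (huv : u ≠ v) {S : Set {w : V // w ≠ v}}
    (hu : ⟨u, huv⟩ ∉ S) : contractVertex huv ⁻¹' S = Subtype.val '' S := by
  ext x
  by_cases hx : x = v
  · subst hx
    simp [contractVertex_self, hu]
  · simp [contractVertex_of_ne huv hx, hx]

lemma preimage_contractVertex_pair (huv : u ≠ v) (t : {w : V // w ≠ v}) :
    contractVertex huv ⁻¹' {⟨u, huv⟩, t} = {u, v, t.1} := by
  ext x
  by_cases hx : x = v
  · subst hx
    simp [contractVertex_self]
  · simp [contractVertex_of_ne huv hx, hx, Subtype.ext_iff]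

theorem kConnectedGen_three_contractNonEdge [Infinite V] (hG : KConnectedGen 3 G) (huv : u ≠ v)
    (hadj : ¬ G.Adj u v) (h : ∀ t, ¬ G.IsSeparator {u, v, t}) :
    KConnectedGen 3 (contractNonEdge G u v) := by
  have : Infinite {w : V // w ≠ v} := (Set.finite_singleton v).infinite_compl.to_subtype
  refine ⟨Infinite.exists_subset_card_eq _ 4, fun S hS hS3 => ?_⟩
  rw [connected_induce_compl_iff]
  refine ⟨hS.infinite_compl.nonempty, not_isSeparator_of_surjective (contractNonEdgeHom huv hadj)
    (contractVertex_surjective huv) ?_⟩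
  rw [coe_contractNonEdgeHom]
  by_cases hu : ⟨u, huv⟩ ∈ S
  · obtain ⟨t, rfl⟩ := Set.exists_eq_pair_of_ncard_lt_three hS hu hS3
    rw [preimage_contractVertex_pair]
    exact h t
  · rw [preimage_contractVertex_of_notMem huv hu]
    exact not_isSeparator_of_kConnectedGen hG (hS.image _) ((Set.ncard_image_le hS).trans_lt hS3)

end Contraction

end SimpleGraph

/-- Every non-complete 3-connected graph with infinitely many vertices contains a
contractible non-edge. -/
theorem stmt8 {V : Type*} [Infinite V] (G : SimpleGraph V)
    (hG : KConnectedGen 3 G) (hnc : ∃ u v : V, u ≠ v ∧ ¬ G.Adj u v) :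
    ∃ u v : V, u ≠ v ∧ ¬ G.Adj u v ∧ KConnectedGen 3 (contractNonEdge G u v) := by
  have h2 (a b : V) : ¬ G.IsSeparator {a, b} :=
    not_isSeparator_of_kConnectedGen hG (Set.toFinite _)
      ((Set.ncard_insert_le a {b}).trans_lt (by simp))
  obtain ⟨u, v, huv, hadj, h⟩ := exists_nonEdge_forall_not_isSeparator h2 hnc
  exact ⟨u, v, huv, hadj, kConnectedGen_three_contractNonEdge hG huv hadj h⟩
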